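/- arXiv:0805.3950 — 6 statements merged into one kernel-verified Lean document; each statement's English description precedes it below -/
import Mathlib

section
/- A bounded real sequence x = {x(n)} is almost convergent if and only if there exists a real number c such that the averages (1/n)·∑_{t=i}^{i+n−1} x(t) converge to c as n → ∞ uniformly in i; and in that case L(x) = c for every Banach limit L. -/
open Filter

/-- A bounded real sequence. -/
def IsBddSeq (x : ℕ → ℝ) : Prop := ∃ C : ℝ, ∀ n, |x n| ≤ C

/-- The sup norm of a (bounded) real sequence. -/
noncomputable def supNorm (x : ℕ → ℝ) : ℝ := ⨆ n, |x n|

/-- A Banach limit: a linear functional on the space of bounded real sequences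
(extended arbitrarily to all sequences) that is positive, shift-invariant,
and sends the constant-one sequence to `1`. -/
def IsBanachLimit (L : (ℕ → ℝ) → ℝ) : Prop :=
  (∀ x y : ℕ → ℝ, IsBddSeq x → IsBddSeq y → L (x + y) = L x + L y) ∧
  (∀ (c : ℝ) (x : ℕ → ℝ), IsBddSeq x → L (c • x) = c * L x) ∧
  (∀ x : ℕ → ℝ, IsBddSeq x → (∀ n, 0 ≤ x n) → 0 ≤ L x) ∧
  (∀ x : ℕ → ℝ, IsBddSeq x → L (fun n => x (n + 1)) = L x) ∧
  L (fun _ => 1) = 1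

/-- A bounded sequence is almost convergent if all Banach limits agree on it. -/
def AlmostConvergent (x : ℕ → ℝ) : Prop :=
  ∃ c : ℝ, ∀ L : (ℕ → ℝ) → ℝ, IsBanachLimit L → L x = c

/-- `a` is a sub-limit of `x` if some subsequence of `x` converges to `a`. -/
def IsSubLimit (x : ℕ → ℝ) (a : ℝ) : Prop :=
  ∃ n : ℕ → ℕ, StrictMono n ∧ Tendsto (fun k => x (n k)) atTop (nhds a)

/-- The set of all sub-limits of `x`. -/
def subLimitSet (x : ℕ → ℝ) : Set ℝ := {a | IsSubLimit x a}

/-- `A({k : i ≤ n_k ≤ i + len - 1})`: the number of indices of the subsequence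
given by `n` falling in the window `[i, i + len - 1]`. -/
noncomputable def windowCount (n : ℕ → ℕ) (i len : ℕ) : ℕ :=
  {k : ℕ | i ≤ n k ∧ n k < i + len}.ncard

/-- Upper weight of a subsequence with index map `n`. -/
noncomputable def upperWeight (n : ℕ → ℕ) : ℝ :=
  limsup (fun len : ℕ => ⨆ i : ℕ, (windowCount n i len : ℝ) / len) atTop

/-- Lower weight of a subsequence with index map `n`. -/
noncomputable def lowerWeight (n : ℕ → ℕ) : ℝ :=
  liminf (fun len : ℕ => ⨅ i : ℕ, (windowCount n i len : ℝ) / len) atTop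

/-- `n` indexes an essential subsequence of `x` for the sub-limit `a`:
it converges to `a` and every subsequence of `x` converging to `a` has all
but finitely many of its indices among the `n k`. -/
def IsEssentialSubseq (x : ℕ → ℝ) (a : ℝ) (n : ℕ → ℕ) : Prop :=
  StrictMono n ∧ Tendsto (fun k => x (n k)) atTop (nhds a) ∧
  ∀ m : ℕ → ℕ, StrictMono m → Tendsto (fun t => x (m t)) atTop (nhds a) →
    {t : ℕ | ¬ ∃ k, n k = m t}.Finite

/-- The weight `w(a)` of a sub-limit `a` of `x` exists and equals `w`:
some essential subsequence of `a` has upper weight and lower weight both `w`. -/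
def HasSubLimitWeight (x : ℕ → ℝ) (a : ℝ) (w : ℝ) : Prop :=
  ∃ n : ℕ → ℕ, IsEssentialSubseq x a n ∧ upperWeight n = w ∧ lowerWeight n = w

/-- `A({k : x(k+i) ∈ S, k = 0, …, len-1})`. -/
noncomputable def seqCount (x : ℕ → ℝ) (S : Set ℝ) (i len : ℕ) : ℕ :=
  {k : ℕ | k < len ∧ x (k + i) ∈ S}.ncard

/-- The weight of `x` with respect to `S` exists and equals `w`:
`A({k : x(k+i) ∈ S, k = 0,…,n-1})/n → w` as `n → ∞`, uniformly in `i`. -/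
def HasSetWeight (x : ℕ → ℝ) (S : Set ℝ) (w : ℝ) : Prop :=
  ∀ ε : ℝ, 0 < ε → ∃ N : ℕ, ∀ n ≥ N, ∀ i : ℕ,
    |(seqCount x S i n : ℝ) / n - w| < ε

/-- `x` is properly distributed: every Borel subset of `[-‖x‖∞, ‖x‖∞]`
has a weight with respect to `x`. -/
def ProperlyDistributed (x : ℕ → ℝ) : Prop :=
  ∀ S : Set ℝ, MeasurableSet S → S ⊆ Set.Icc (-(supNorm x)) (supNorm x) →
    ∃ w : ℝ, HasSetWeight x S w

/-- `s` is simply distributed: it takes finitely many values, and each value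
has a weight with respect to `s`. -/
def SimplyDistributed (s : ℕ → ℝ) : Prop :=
  (Set.range s).Finite ∧ ∀ a ∈ Set.range s, ∃ w : ℝ, HasSetWeight s {a} w

/-! For bounded `x` let `q x = lim_n sup_i (1/n) ∑_{t<n} x (i + t)` (Sucheston's functional; the
limit exists by Fekete's lemma since the sups are subadditive in `n`). It is sublinear, and every
Banach limit satisfies `-q (-x) ≤ L x ≤ q x`, because `L` is invariant under window averaging.
Conversely, by Hahn–Banach every value in `[-q (-x), q x]` is taken by a linear functional
dominated by `q`, and domination by `q` alone forces positivity, `L 1 = 1` and shift invariance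
(the window sums of `x (· + 1) - x` telescope, so are bounded). Hence `x` is almost convergent iff
`q x = -q (-x)`, which is exactly uniform convergence of the window averages to that value. -/

open Topology

namespace IsBddSeq

variable {x y : ℕ → ℝ}

lemma add (hx : IsBddSeq x) (hy : IsBddSeq y) : IsBddSeq (x + y) := by
  obtain ⟨C, hC⟩ := hx
  obtain ⟨D, hD⟩ := hy
  exact ⟨C + D, fun n => (abs_add_le _ _).trans (add_le_add (hC n) (hD n))⟩

lemma smul (hx : IsBddSeq x) (c : ℝ) : IsBddSeq (c • x) := by
  obtain ⟨C, hC⟩ := hx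
  refine ⟨|c| * C, fun n => ?_⟩
  rw [Pi.smul_apply, smul_eq_mul, abs_mul]
  exact mul_le_mul_of_nonneg_left (hC n) (abs_nonneg c)

lemma neg (hx : IsBddSeq x) : IsBddSeq (-x) := by
  simpa using hx.smul (-1)

lemma sub (hx : IsBddSeq x) (hy : IsBddSeq y) : IsBddSeq (x - y) := by
  simpa [sub_eq_add_neg] using hx.add hy.neg

lemma comp_add_right (hx : IsBddSeq x) (m : ℕ) : IsBddSeq fun n => x (n + m) := by
  obtain ⟨C, hC⟩ := hx
  exact ⟨C, fun n => hC (n + m)⟩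

lemma const (c : ℝ) : IsBddSeq fun _ => c := ⟨|c|, fun _ => le_rfl⟩

end IsBddSeq

def boundedSeq : Submodule ℝ (ℕ → ℝ) where
  carrier := {x | IsBddSeq x}
  add_mem' := IsBddSeq.add
  zero_mem' := IsBddSeq.const 0
  smul_mem' c _ hx := IsBddSeq.smul hx c

def windowSum (x : ℕ → ℝ) (n i : ℕ) : ℝ := ∑ t ∈ Finset.range n, x (i + t)

noncomputable def windowAvg (x : ℕ → ℝ) (n i : ℕ) : ℝ := windowSum x n i / n

noncomputable def maxWindowSum (x : ℕ → ℝ) (n : ℕ) : ℝ := ⨆ i, windowSum x n i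

/-- Sucheston's functional `q`. The limit exists for bounded `x` (`tendsto_maxWindowSum_div`);
otherwise `limUnder` returns a junk value. -/
noncomputable def upperMean (x : ℕ → ℝ) : ℝ := limUnder atTop fun n : ℕ => maxWindowSum x n / n

section windowSum

variable {x : ℕ → ℝ}

lemma windowSum_add_length (x : ℕ → ℝ) (m n i : ℕ) :
    windowSum x (m + n) i = windowSum x m i + windowSum x n (i + m) := by
  simp only [windowSum, Finset.sum_range_add, add_assoc]

lemma windowSum_succ (x : ℕ → ℝ) (n : ℕ) :
    windowSum x (n + 1) = windowSum x n + fun i => x (i + n) := by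
  ext i
  rw [Pi.add_apply, windowSum, Finset.sum_range_succ, add_comm i n]
  rfl

lemma windowSum_add (x y : ℕ → ℝ) (n i : ℕ) :
    windowSum (x + y) n i = windowSum x n i + windowSum y n i :=
  Finset.sum_add_distrib

lemma windowSum_smul (c : ℝ) (x : ℕ → ℝ) (n i : ℕ) :
    windowSum (c • x) n i = c * windowSum x n i :=
  (Finset.mul_sum _ _ _).symm

lemma windowSum_neg (x : ℕ → ℝ) (n i : ℕ) : windowSum (-x) n i = -windowSum x n i :=
  Finset.sum_neg_distrib _

lemma windowAvg_neg (x : ℕ → ℝ) (n i : ℕ) : windowAvg (-x) n i = -windowAvg x n i := by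
  rw [windowAvg, windowAvg, windowSum_neg, neg_div]

lemma windowSum_const (c : ℝ) (n i : ℕ) : windowSum (fun _ => c) n i = n * c := by
  simp [windowSum]

lemma windowSum_shift_sub (x : ℕ → ℝ) (n i : ℕ) :
    windowSum (fun j => x (j + 1) - x j) n i = x (i + n) - x i :=
  Finset.sum_range_sub (fun t => x (i + t)) n

lemma abs_windowSum_le {C : ℝ} (hC : ∀ k, |x k| ≤ C) (n i : ℕ) :
    |windowSum x n i| ≤ n * C := by
  calc |windowSum x n i| ≤ ∑ t ∈ Finset.range n, |x (i + t)| := Finset.abs_sum_le_sum_abs _ _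
    _ ≤ ∑ _t ∈ Finset.range n, C := Finset.sum_le_sum fun t _ => hC _
    _ = n * C := by simp

lemma isBddSeq_windowSum (hx : IsBddSeq x) (n : ℕ) : IsBddSeq (windowSum x n) := by
  obtain ⟨C, hC⟩ := hx
  exact ⟨n * C, abs_windowSum_le hC n⟩

lemma bddAbove_range_windowSum (hx : IsBddSeq x) (n : ℕ) :
    BddAbove (Set.range (windowSum x n)) := by
  obtain ⟨C, hC⟩ := isBddSeq_windowSum hx n
  exact ⟨C, by rintro _ ⟨i, rfl⟩; exact (le_abs_self _).trans (hC i)⟩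

lemma windowSum_le_maxWindowSum (hx : IsBddSeq x) (n i : ℕ) :
    windowSum x n i ≤ maxWindowSum x n :=
  le_ciSup (bddAbove_range_windowSum hx n) i

lemma windowAvg_le_maxWindowSum_div (hx : IsBddSeq x) (n i : ℕ) :
    windowAvg x n i ≤ maxWindowSum x n / n :=
  div_le_div_of_nonneg_right (windowSum_le_maxWindowSum hx n i) n.cast_nonneg

lemma subadditive_maxWindowSum (hx : IsBddSeq x) : Subadditive (maxWindowSum x) := fun m n =>
  ciSup_le fun i => by
    rw [windowSum_add_length]
    exact add_le_add (windowSum_le_maxWindowSum hx m i) (windowSum_le_maxWindowSum hx n (i + m))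

lemma tendsto_maxWindowSum_div (hx : IsBddSeq x) :
    Tendsto (fun n : ℕ => maxWindowSum x n / n) atTop (𝓝 (upperMean x)) := by
  obtain ⟨C, hC⟩ := hx
  have hbdd : BddBelow (Set.range fun n : ℕ => maxWindowSum x n / n) := by
    refine ⟨-C, ?_⟩
    rintro _ ⟨n, rfl⟩
    rcases n.eq_zero_or_pos with rfl | hn
    · simpa using (abs_nonneg _).trans (hC 0)
    · rw [le_div_iff₀ (by exact_mod_cast hn), neg_mul, mul_comm]
      exact (neg_le_of_abs_le (abs_windowSum_le hC n 0)).trans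
        (windowSum_le_maxWindowSum ⟨C, hC⟩ n 0)
  exact tendsto_nhds_limUnder ⟨_, (subadditive_maxWindowSum ⟨C, hC⟩).tendsto_lim hbdd⟩

end windowSum

section upperMean

variable {x y : ℕ → ℝ} {c : ℝ}

lemma upperMean_le_iff (hx : IsBddSeq x) :
    upperMean x ≤ c ↔ ∀ ε > 0, ∀ᶠ n in atTop, ∀ i, windowAvg x n i < c + ε := by
  constructor
  · intro h ε hε
    filter_upwards [(tendsto_maxWindowSum_div hx).eventually_lt_const
      (show upperMean x < c + ε by linarith)] with n hn i
    exact (windowAvg_le_maxWindowSum_div hx n i).trans_lt hn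
  · refine fun h => le_of_forall_pos_le_add fun ε hε =>
      le_of_tendsto (tendsto_maxWindowSum_div hx) ?_
    filter_upwards [h ε hε, eventually_gt_atTop 0] with n hn hn₀
    have hn₀' : (0 : ℝ) < n := by exact_mod_cast hn₀
    rw [div_le_iff₀ hn₀']
    exact ciSup_le fun i => ((div_lt_iff₀ hn₀').1 (hn i)).le

lemma upperMean_le_of_windowSum_le (hx : IsBddSeq x) {D : ℝ}
    (h : ∀ n i, windowSum x n i ≤ n * c + D) : upperMean x ≤ c := by
  refine (upperMean_le_iff hx).2 fun ε hε => ?_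
  filter_upwards [eventually_gt_atTop 0,
    (tendsto_const_div_atTop_nhds_zero_nat D).eventually_lt_const hε] with n hn₀ hn i
  have hn₀' : (0 : ℝ) < n := by exact_mod_cast hn₀
  calc windowAvg x n i ≤ (n * c + D) / n := div_le_div_of_nonneg_right (h n i) hn₀'.le
    _ = c + D / n := by field_simp
    _ < c + ε := by linarith

lemma maxWindowSum_add_le (hx : IsBddSeq x) (hy : IsBddSeq y) (n : ℕ) :
    maxWindowSum (x + y) n ≤ maxWindowSum x n + maxWindowSum y n :=
  ciSup_le fun i => by
    rw [windowSum_add]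
    exact add_le_add (windowSum_le_maxWindowSum hx n i) (windowSum_le_maxWindowSum hy n i)

lemma upperMean_add_le (hx : IsBddSeq x) (hy : IsBddSeq y) :
    upperMean (x + y) ≤ upperMean x + upperMean y := by
  refine le_of_tendsto_of_tendsto' (tendsto_maxWindowSum_div (hx.add hy))
    ((tendsto_maxWindowSum_div hx).add (tendsto_maxWindowSum_div hy)) fun n => ?_
  rw [← add_div]
  exact div_le_div_of_nonneg_right (maxWindowSum_add_le hx hy n) n.cast_nonneg

lemma maxWindowSum_smul (hc : 0 ≤ c) (x : ℕ → ℝ) (n : ℕ) :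
    maxWindowSum (c • x) n = c * maxWindowSum x n := by
  simp only [maxWindowSum, windowSum_smul, Real.mul_iSup_of_nonneg hc]

lemma upperMean_smul (hx : IsBddSeq x) (hc : 0 ≤ c) : upperMean (c • x) = c * upperMean x := by
  refine tendsto_nhds_unique (tendsto_maxWindowSum_div (hx.smul c)) ?_
  simpa only [maxWindowSum_smul hc, mul_div_assoc] using (tendsto_maxWindowSum_div hx).const_mul c

lemma neg_upperMean_neg_le (hx : IsBddSeq x) : -upperMean (-x) ≤ upperMean x := by
  have h₀ : upperMean 0 = 0 := by simpa using upperMean_smul hx le_rfl (c := 0)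
  have := upperMean_add_le hx hx.neg
  rw [add_neg_cancel, h₀] at this
  linarith

lemma upperMean_neg_nonpos (hx : IsBddSeq x) (hpos : ∀ n, 0 ≤ x n) :
    upperMean (-x) ≤ 0 := by
  refine upperMean_le_of_windowSum_le hx.neg (D := 0) fun n i => ?_
  rw [windowSum_neg, mul_zero, add_zero, neg_nonpos]
  exact Finset.sum_nonneg fun t _ => hpos (i + t)

lemma upperMean_const_le (c : ℝ) : upperMean (fun _ => c) ≤ c :=
  upperMean_le_of_windowSum_le (IsBddSeq.const c) (D := 0) fun n i => by
    rw [windowSum_const, add_zero]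

lemma upperMean_shift_sub_nonpos (hx : IsBddSeq x) :
    upperMean (fun j => x (j + 1) - x j) ≤ 0 := by
  have hbdd := (hx.comp_add_right 1).sub hx
  obtain ⟨C, hC⟩ := hx
  refine upperMean_le_of_windowSum_le hbdd (D := C + C) fun n i => ?_
  rw [windowSum_shift_sub, mul_zero, zero_add]
  linarith [le_abs_self (x (i + n)), neg_abs_le (x i), hC (i + n), hC i]

theorem tendstoUniformly_windowAvg_iff (hx : IsBddSeq x) :
    TendstoUniformly (windowAvg x) (fun _ => c) atTop ↔
      upperMean x ≤ c ∧ upperMean (-x) ≤ -c := by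
  simp only [Metric.tendstoUniformly_iff, upperMean_le_iff hx, upperMean_le_iff hx.neg,
    windowAvg_neg, Real.dist_eq, abs_sub_lt_iff]
  constructor
  · intro h
    refine ⟨fun ε hε => ?_, fun ε hε => ?_⟩ <;>
      filter_upwards [h ε hε] with n hn i <;> linarith [hn i]
  · rintro ⟨h₁, h₂⟩ ε hε
    filter_upwards [h₁ ε hε, h₂ ε hε] with n hn₁ hn₂ i
    constructor <;> linarith [hn₁ i, hn₂ i]

end upperMean

theorem exists_linearMap_le_sublinear_apply_eq {E : Type*} [AddCommGroup E] [Module ℝ E]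
    (N : E → ℝ) (N_hom : ∀ c : ℝ, 0 < c → ∀ x, N (c • x) = c * N x)
    (N_add : ∀ x y, N (x + y) ≤ N x + N y) {x : E} {v : ℝ}
    (hv₁ : -N (-x) ≤ v) (hv₂ : v ≤ N x) :
    ∃ g : E →ₗ[ℝ] ℝ, (∀ y, g y ≤ N y) ∧ g x = v := by
  have N_zero : N 0 = 0 := by
    have := N_hom 2 two_pos 0
    rw [smul_zero] at this
    linarith
  have hxv : ∀ c : ℝ, c • x = 0 → c • v = 0 := by
    intro c hc
    rcases eq_or_ne c 0 with rfl | hc₀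
    · exact zero_smul _ _
    · obtain rfl : x = 0 := (smul_eq_zero_iff_right hc₀).1 hc
      rw [neg_zero, N_zero] at hv₁
      rw [N_zero] at hv₂
      rw [le_antisymm hv₂ (by linarith), smul_zero]
  set f : E →ₗ.[ℝ] ℝ := LinearPMap.mkSpanSingleton' x v hxv
  have hfN : ∀ y : f.domain, f y ≤ N y := by
    rintro ⟨_, hy⟩
    obtain ⟨c, rfl⟩ := Submodule.mem_span_singleton.1 hy
    rw [LinearPMap.mkSpanSingleton'_apply, RingHom.id_apply, smul_eq_mul]
    change c * v ≤ N (c • x)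
    rcases lt_trichotomy c 0 with hc | rfl | hc
    · rw [← neg_smul_neg, N_hom (-c) (neg_pos.2 hc)]
      nlinarith
    · simp [N_zero]
    · rw [N_hom c hc]
      exact mul_le_mul_of_nonneg_left hv₂ hc.le
  obtain ⟨g, hgf, hgN⟩ := exists_extension_of_le_sublinear f N N_hom N_add hfN
  exact ⟨g, hgN, (hgf ⟨x, Submodule.mem_span_singleton_self x⟩).trans
    (LinearPMap.mkSpanSingleton'_apply_self x v hxv _)⟩

namespace IsBanachLimit

variable {L : (ℕ → ℝ) → ℝ} {x y : ℕ → ℝ}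

lemma apply_neg (hL : IsBanachLimit L) (hx : IsBddSeq x) : L (-x) = -L x := by
  simpa using hL.2.1 (-1) x hx

lemma apply_sub (hL : IsBanachLimit L) (hx : IsBddSeq x) (hy : IsBddSeq y) :
    L (x - y) = L x - L y := by
  rw [sub_eq_add_neg, hL.1 x (-y) hx hy.neg, hL.apply_neg hy, sub_eq_add_neg]

lemma apply_const (hL : IsBanachLimit L) (c : ℝ) : L (fun _ => c) = c := by
  have hc : (fun _ : ℕ => c) = c • fun _ => 1 := funext fun _ => (mul_one c).symm
  rw [hc, hL.2.1 c _ (IsBddSeq.const 1), hL.2.2.2.2, mul_one]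

lemma apply_le (hL : IsBanachLimit L) (hx : IsBddSeq x) {M : ℝ} (h : ∀ i, x i ≤ M) :
    L x ≤ M := by
  have := hL.2.2.1 _ ((IsBddSeq.const M).sub hx) fun i => sub_nonneg.2 (h i)
  rw [hL.apply_sub (IsBddSeq.const M) hx, hL.apply_const] at this
  linarith

lemma apply_comp_add_right (hL : IsBanachLimit L) (hx : IsBddSeq x) (m : ℕ) :
    L (fun i => x (i + m)) = L x := by
  induction m with
  | zero => rfl
  | succ m ih =>
    rw [← ih, ← hL.2.2.2.1 _ (hx.comp_add_right m)]
    simp only [add_right_comm _ 1 m, add_assoc]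

lemma apply_windowSum (hL : IsBanachLimit L) (hx : IsBddSeq x) (n : ℕ) :
    L (windowSum x n) = n * L x := by
  induction n with
  | zero =>
    rw [Nat.cast_zero, zero_mul, ← hL.apply_const 0]
    exact congrArg L (funext fun _ => Finset.sum_range_zero _)
  | succ n ih =>
    rw [windowSum_succ, hL.1 _ _ (isBddSeq_windowSum hx n) (hx.comp_add_right n), ih,
      hL.apply_comp_add_right hx n]
    push_cast
    ring

lemma apply_le_upperMean (hL : IsBanachLimit L) (hx : IsBddSeq x) : L x ≤ upperMean x := by
  refine ge_of_tendsto (tendsto_maxWindowSum_div hx) ?_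
  filter_upwards [eventually_gt_atTop 0] with n hn
  rw [le_div_iff₀ (by exact_mod_cast hn), mul_comm, ← hL.apply_windowSum hx n]
  exact hL.apply_le (isBddSeq_windowSum hx n) (windowSum_le_maxWindowSum hx n)

lemma neg_upperMean_neg_le_apply (hL : IsBanachLimit L) (hx : IsBddSeq x) :
    -upperMean (-x) ≤ L x := by
  have := hL.apply_le_upperMean hx.neg
  rw [hL.apply_neg hx] at this
  linarith

end IsBanachLimit

open scoped Classical in
noncomputable def extendByZero (g : boundedSeq →ₗ[ℝ] ℝ) (x : ℕ → ℝ) : ℝ :=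
  if hx : IsBddSeq x then g ⟨x, hx⟩ else 0

lemma extendByZero_apply (g : boundedSeq →ₗ[ℝ] ℝ) {x : ℕ → ℝ} (hx : IsBddSeq x) :
    extendByZero g x = g ⟨x, hx⟩ :=
  dif_pos hx

theorem isBanachLimit_extendByZero (g : boundedSeq →ₗ[ℝ] ℝ) (hg : ∀ z, g z ≤ upperMean z) :
    IsBanachLimit (extendByZero g) := by
  refine ⟨fun x y hx hy => ?_, fun c x hx => ?_, fun x hx hpos => ?_, fun x hx => ?_, ?_⟩
  · rw [extendByZero_apply g hx, extendByZero_apply g hy, extendByZero_apply g (hx.add hy)]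
    exact map_add g ⟨x, hx⟩ ⟨y, hy⟩
  · rw [extendByZero_apply g hx, extendByZero_apply g (hx.smul c)]
    exact map_smul g c ⟨x, hx⟩
  · rw [extendByZero_apply g hx]
    have := (hg (-⟨x, hx⟩)).trans (upperMean_neg_nonpos hx hpos)
    rw [map_neg] at this
    linarith
  · rw [extendByZero_apply g hx, extendByZero_apply g (hx.comp_add_right 1)]
    have h₁ : g (⟨_, hx.comp_add_right 1⟩ - ⟨x, hx⟩) ≤ 0 :=
      (hg _).trans (upperMean_shift_sub_nonpos hx)
    have h₂ : g (⟨x, hx⟩ - ⟨_, hx.comp_add_right 1⟩) ≤ 0 := by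
      refine (hg _).trans
        (le_of_eq_of_le (congrArg upperMean ?_) (upperMean_shift_sub_nonpos hx.neg))
      funext j
      exact (neg_sub_neg _ _).symm
    rw [map_sub] at h₁ h₂
    linarith
  · rw [extendByZero_apply g (IsBddSeq.const 1)]
    have h₁ := (hg ⟨_, IsBddSeq.const 1⟩).trans (upperMean_const_le 1)
    have h₂ := (hg (-⟨_, IsBddSeq.const 1⟩)).trans (upperMean_const_le (-1))
    rw [map_neg] at h₂
    linarith

theorem exists_isBanachLimit_apply_eq {x : ℕ → ℝ} (hx : IsBddSeq x) {v : ℝ}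
    (hv₁ : -upperMean (-x) ≤ v) (hv₂ : v ≤ upperMean x) :
    ∃ L : (ℕ → ℝ) → ℝ, IsBanachLimit L ∧ L x = v := by
  obtain ⟨g, hgN, hgx⟩ := exists_linearMap_le_sublinear_apply_eq (E := boundedSeq)
    (fun z => upperMean z)
    (fun _ hc z => by rw [Submodule.coe_smul]; exact upperMean_smul z.2 hc.le)
    (fun y z => by rw [Submodule.coe_add]; exact upperMean_add_le y.2 z.2)
    (x := ⟨x, hx⟩) hv₁ hv₂
  exact ⟨extendByZero g, isBanachLimit_extendByZero g hgN, (extendByZero_apply g hx).trans hgx⟩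

/-- Lorentz' criterion: a bounded real sequence is almost convergent iff its
windowed averages `(1/n) ∑_{t=i}^{i+n-1} x(t)` converge to some `c` uniformly
in `i`; and in that case every Banach limit sends `x` to `c`. -/
theorem almostConvergent_iff_uniform_averages (x : ℕ → ℝ) (hx : IsBddSeq x) :
    (AlmostConvergent x ↔
      ∃ c : ℝ, ∀ ε : ℝ, 0 < ε → ∃ N : ℕ, ∀ n ≥ N, ∀ i : ℕ,
        |(∑ t ∈ Finset.range n, x (i + t)) / n - c| < ε) ∧
    (∀ c : ℝ,
      (∀ ε : ℝ, 0 < ε → ∃ N : ℕ, ∀ n ≥ N, ∀ i : ℕ,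
        |(∑ t ∈ Finset.range n, x (i + t)) / n - c| < ε) →
      ∀ L : (ℕ → ℝ) → ℝ, IsBanachLimit L → L x = c) := by
  have uniform_iff : ∀ c : ℝ, (∀ ε : ℝ, 0 < ε → ∃ N : ℕ, ∀ n ≥ N, ∀ i : ℕ,
      |(∑ t ∈ Finset.range n, x (i + t)) / n - c| < ε) ↔
      upperMean x ≤ c ∧ upperMean (-x) ≤ -c := fun c => by
    rw [← tendstoUniformly_windowAvg_iff hx, Metric.tendstoUniformly_iff]
    simp only [dist_comm c, Real.dist_eq, eventually_atTop, windowAvg, windowSum]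
  have banach_eq (c : ℝ) (hc : upperMean x ≤ c ∧ upperMean (-x) ≤ -c) (L : (ℕ → ℝ) → ℝ)
      (hL : IsBanachLimit L) : L x = c := by
    linarith [hc.1, hc.2, hL.apply_le_upperMean hx, hL.neg_upperMean_neg_le_apply hx]
  refine ⟨⟨fun ⟨c, hc⟩ => ⟨c, (uniform_iff c).2 ?_⟩,
    fun ⟨c, hc⟩ => ⟨c, banach_eq c ((uniform_iff c).1 hc)⟩⟩,
    fun c hc => banach_eq c ((uniform_iff c).1 hc)⟩
  obtain ⟨L₁, hL₁, hL₁x⟩ := exists_isBanachLimit_apply_eq hx (neg_upperMean_neg_le hx) le_rfl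
  obtain ⟨L₂, hL₂, hL₂x⟩ := exists_isBanachLimit_apply_eq hx le_rfl (neg_upperMean_neg_le hx)
  constructor <;> linarith [hc L₁ hL₁, hc L₂ hL₂]
end

section
/- Let x be a bounded real sequence and let a be a sub-limit of x. If {x(n_k)} and {x(m_t)} are two essential subsequences of a, then w^u({x(n_k)}) = w^u({x(m_t)}) and w_l({x(n_k)}) = w_l({x(m_t)}). -/
open Filter

/-!
Essentiality forces the index sets of two essential subsequences of the same sub-limit to differ
by finitely many elements, say `d`. Hence every window count of one is at most the corresponding
count of the other plus `d`, the normalized counts (and their sups and infs over windows of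
length `len`) differ by at most `d / len → 0`, and such perturbations change neither `limsup`
nor `liminf`.
-/

open Set Topology

namespace Filter

variable {ι : Type*} {l : Filter ι} [l.NeBot] {u v e : ι → ℝ}

theorem limsup_le_limsup_of_le_add (hu : IsBoundedUnder (· ≥ ·) l u)
    (hv : IsBoundedUnder (· ≤ ·) l v) (hv' : IsBoundedUnder (· ≥ ·) l v)
    (he : Tendsto e l (𝓝 0)) (h : ∀ᶠ x in l, u x ≤ v x + e x) :
    limsup u l ≤ limsup v l :=
  calc limsup u l ≤ limsup (v + e) l :=
        limsup_le_limsup h hu.isCoboundedUnder_le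
          (isBoundedUnder_le_add hv he.isBoundedUnder_le)
    _ ≤ limsup v l + limsup e l :=
        limsup_add_le hv' hv he.isBoundedUnder_ge.isCoboundedUnder_le he.isBoundedUnder_le
    _ = limsup v l := by rw [he.limsup_eq, add_zero]

theorem liminf_le_liminf_of_le_add (hu : IsBoundedUnder (· ≥ ·) l u)
    (hv : IsBoundedUnder (· ≤ ·) l v) (hv' : IsBoundedUnder (· ≥ ·) l v)
    (he : Tendsto e l (𝓝 0)) (h : ∀ᶠ x in l, u x ≤ v x + e x) :
    liminf u l ≤ liminf v l :=
  calc liminf u l ≤ liminf (v + e) l :=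
        liminf_le_liminf h hu (isBoundedUnder_le_add hv he.isBoundedUnder_le).isCoboundedUnder_ge
    _ ≤ liminf v l + limsup e l := by
        rw [add_comm v, add_comm (liminf v l)]
        exact liminf_add_le he.isBoundedUnder_ge he.isBoundedUnder_le hv' hv.isCoboundedUnder_ge
    _ = liminf v l := by rw [he.limsup_eq, add_zero]

end Filter

section WindowCount

variable {n m : ℕ → ℕ}

theorem windowCount_eq_ncard_range_inter (hn : n.Injective) (i len : ℕ) :
    windowCount n i len = (range n ∩ Ico i (i + len)).ncard := by
  rw [windowCount, ← image_preimage_eq_range_inter, ncard_image_of_injective _ hn]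
  rfl

theorem windowCount_le (hn : n.Injective) (i len : ℕ) : windowCount n i len ≤ len := by
  rw [windowCount_eq_ncard_range_inter hn]
  simpa using ncard_inter_le_ncard_right (range n) (Ico i (i + len))

theorem windowCount_le_add_ncard_diff (hn : n.Injective) (hm : m.Injective)
    (hfin : (range n \ range m).Finite) (i len : ℕ) :
    windowCount n i len ≤ windowCount m i len + (range n \ range m).ncard := by
  rw [windowCount_eq_ncard_range_inter hn, windowCount_eq_ncard_range_inter hm]
  calc (range n ∩ Ico i (i + len)).ncard
      ≤ (range m ∩ Ico i (i + len) ∪ range n \ range m).ncard := by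
        refine ncard_le_ncard (fun k ⟨hkn, hkI⟩ => ?_)
          (((finite_Ico _ _).inter_of_right _).union hfin)
        by_cases hkm : k ∈ range m
        exacts [Or.inl ⟨hkm, hkI⟩, Or.inr ⟨hkn, hkm⟩]
    _ ≤ _ := ncard_union_le _ _

theorem windowRatio_le_one (hn : n.Injective) (i len : ℕ) :
    (windowCount n i len : ℝ) / len ≤ 1 :=
  div_le_one_of_le₀ (mod_cast windowCount_le hn i len) len.cast_nonneg

theorem iSup_windowRatio_le_one (hn : n.Injective) (len : ℕ) :
    ⨆ i, (windowCount n i len : ℝ) / len ≤ 1 :=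
  ciSup_le fun i => windowRatio_le_one hn i len

theorem iInf_windowRatio_le_one (hn : n.Injective) (len : ℕ) :
    ⨅ i, (windowCount n i len : ℝ) / len ≤ 1 :=
  (ciInf_le ⟨0, forall_mem_range.2 fun _ => by positivity⟩ 0).trans
    (windowRatio_le_one hn 0 len)

theorem windowRatio_le_add (hn : n.Injective) (hm : m.Injective)
    (hfin : (range n \ range m).Finite) (i len : ℕ) :
    (windowCount n i len : ℝ) / len ≤
      (windowCount m i len : ℝ) / len + ((range n \ range m).ncard : ℝ) / len := by
  rw [← add_div]
  exact div_le_div_of_nonneg_right (mod_cast windowCount_le_add_ncard_diff hn hm hfin i len)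
    len.cast_nonneg

theorem iSup_windowRatio_le_add (hn : n.Injective) (hm : m.Injective)
    (hfin : (range n \ range m).Finite) (len : ℕ) :
    ⨆ i, (windowCount n i len : ℝ) / len ≤
      (⨆ i, (windowCount m i len : ℝ) / len) + ((range n \ range m).ncard : ℝ) / len :=
  ciSup_le fun i => (windowRatio_le_add hn hm hfin i len).trans <| add_le_add_left
    (le_ciSup ⟨1, forall_mem_range.2 fun j => windowRatio_le_one hm j len⟩ i) _

theorem iInf_windowRatio_le_add (hn : n.Injective) (hm : m.Injective)
    (hfin : (range n \ range m).Finite) (len : ℕ) :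
    ⨅ i, (windowCount n i len : ℝ) / len ≤
      (⨅ i, (windowCount m i len : ℝ) / len) + ((range n \ range m).ncard : ℝ) / len := by
  rw [← sub_le_iff_le_add]
  refine le_ciInf fun i => sub_le_iff_le_add.2 <| le_trans ?_ (windowRatio_le_add hn hm hfin i len)
  exact ciInf_le ⟨0, forall_mem_range.2 fun j => by positivity⟩ i

theorem upperWeight_le_of_finite_range_diff (hn : n.Injective) (hm : m.Injective)
    (hfin : (range n \ range m).Finite) : upperWeight n ≤ upperWeight m :=
  limsup_le_limsup_of_le_add
    (isBoundedUnder_of ⟨0, fun _ => Real.iSup_nonneg fun _ => by positivity⟩)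
    (isBoundedUnder_of ⟨1, iSup_windowRatio_le_one hm⟩)
    (isBoundedUnder_of ⟨0, fun _ => Real.iSup_nonneg fun _ => by positivity⟩)
    (tendsto_const_div_atTop_nhds_zero_nat _)
    (Eventually.of_forall (iSup_windowRatio_le_add hn hm hfin))

theorem lowerWeight_le_of_finite_range_diff (hn : n.Injective) (hm : m.Injective)
    (hfin : (range n \ range m).Finite) : lowerWeight n ≤ lowerWeight m :=
  liminf_le_liminf_of_le_add
    (isBoundedUnder_of ⟨0, fun _ => Real.iInf_nonneg fun _ => by positivity⟩)
    (isBoundedUnder_of ⟨1, iInf_windowRatio_le_one hm⟩)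
    (isBoundedUnder_of ⟨0, fun _ => Real.iInf_nonneg fun _ => by positivity⟩)
    (tendsto_const_div_atTop_nhds_zero_nat _)
    (Eventually.of_forall (iInf_windowRatio_le_add hn hm hfin))

end WindowCount

theorem IsEssentialSubseq.finite_range_diff {x : ℕ → ℝ} {a : ℝ} {n m : ℕ → ℕ}
    (hn : IsEssentialSubseq x a n) (hm : IsEssentialSubseq x a m) :
    (range m \ range n).Finite :=
  ((hn.2.2 m hm.1 hm.2.1).image m).subset fun _ ⟨⟨t, ht⟩, hnot⟩ =>
    ⟨t, fun ⟨k, hk⟩ => hnot ⟨k, hk.trans ht⟩, ht⟩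

theorem essentialSubseq_weights_eq_general (x : ℕ → ℝ) (a : ℝ) (n m : ℕ → ℕ)
    (hn : IsEssentialSubseq x a n) (hm : IsEssentialSubseq x a m) :
    upperWeight n = upperWeight m ∧ lowerWeight n = lowerWeight m := by
  have hnm := hm.finite_range_diff hn
  have hmn := hn.finite_range_diff hm
  have hni := hn.1.injective
  have hmi := hm.1.injective
  exact ⟨(upperWeight_le_of_finite_range_diff hni hmi hnm).antisymm
      (upperWeight_le_of_finite_range_diff hmi hni hmn),
    (lowerWeight_le_of_finite_range_diff hni hmi hnm).antisymm
      (lowerWeight_le_of_finite_range_diff hmi hni hmn)⟩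

/-- Any two essential subsequences of a sub-limit `a` of a bounded sequence `x`
have the same upper weight and the same lower weight. -/
theorem essentialSubseq_weights_eq (x : ℕ → ℝ) (hx : IsBddSeq x) (a : ℝ)
    (ha : IsSubLimit x a) (n m : ℕ → ℕ)
    (hn : IsEssentialSubseq x a n) (hm : IsEssentialSubseq x a m) :
    upperWeight n = upperWeight m ∧ lowerWeight n = lowerWeight m :=
  essentialSubseq_weights_eq_general x a n m hn hm
end

section
/- Let x be a bounded real sequence and suppose a is a sub-limit of x. Then a has an essential subsequence if and only if a is an isolated sub-limit of x, i.e., there exists ε₀ > 0 such that (a−ε₀, a+ε₀) ∩ S(x) = {a}. -/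
open Filter

section EssAux

/-- Near any sub-limit there are infinitely many indices. -/
lemma infinite_near_subLimit (x : ℕ → ℝ) (b : ℝ) (hb : IsSubLimit x b) {r : ℝ} (hr : 0 < r) :
    {i : ℕ | |x i - b| < r}.Infinite := by
  obtain ⟨m, hm, hten⟩ := hb
  rw [Metric.tendsto_atTop] at hten
  obtain ⟨K, hK⟩ := hten r hr
  apply Set.infinite_of_injective_forall_mem (f := fun k : ℕ => m (k + K))
  · intro i j hij
    have := hm.injective hij
    omega
  · intro k
    have := hK (k + K) (Nat.le_add_left _ _)
    simpa [Real.dist_eq] using this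

end EssAux

/-- A sub-limit `a` of a bounded sequence `x` has an essential subsequence iff
`a` is an isolated sub-limit of `x`. -/
theorem exists_essentialSubseq_iff_isolated (x : ℕ → ℝ) (hx : IsBddSeq x)
    (a : ℝ) (ha : IsSubLimit x a) :
    (∃ n : ℕ → ℕ, IsEssentialSubseq x a n) ↔
      ∃ ε₀ : ℝ, 0 < ε₀ ∧ Set.Ioo (a - ε₀) (a + ε₀) ∩ subLimitSet x = {a} := by
  constructor
  · -- essential subsequence → isolated
    rintro ⟨n, hmono, htend, hess⟩
    by_contra hniso
    push_neg at hniso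
    have key : ∀ j : ℕ, ∃ b : ℝ, b ∈ Set.Ioo (a - (1:ℝ)/(j+1)) (a + 1/(j+1)) ∧
        IsSubLimit x b ∧ b ≠ a := by
      intro j
      have hpos : (0:ℝ) < 1/(j+1) := by positivity
      have hne := hniso (1/(j+1)) hpos
      by_contra hno
      push_neg at hno
      apply hne
      apply Set.eq_singleton_iff_unique_mem.mpr
      refine ⟨⟨Set.mem_Ioo.mpr ⟨by linarith, by linarith⟩, ha⟩, ?_⟩
      rintro b ⟨hb1, hb2⟩
      exact hno b hb1 hb2
    have hB : ∀ j : ℕ, {i : ℕ | (¬ ∃ k, n k = i) ∧ |x i - a| < 2/(j+1)}.Infinite := by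
      intro j
      obtain ⟨b, hbIoo, hbSub, hbne⟩ := key j
      rw [Set.mem_Ioo] at hbIoo
      set r : ℝ := |b - a| / 2 with hr
      have habs : 0 < |b - a| := abs_pos.mpr (sub_ne_zero.mpr hbne)
      have hrpos : 0 < r := by positivity
      have hba : |b - a| < 1/(j+1) :=
        abs_sub_lt_iff.mpr ⟨by linarith [hbIoo.2], by linarith [hbIoo.1]⟩
      have hinf := infinite_near_subLimit x b hbSub hrpos
      rw [Metric.tendsto_atTop] at htend
      obtain ⟨K, hK⟩ := htend r hrpos
      have hfin : {i : ℕ | |x i - b| < r ∧ ∃ k, n k = i}.Finite := by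
        apply Set.Finite.subset ((Set.finite_Iio K).image n)
        rintro i ⟨hir, k, rfl⟩
        refine ⟨k, ?_, rfl⟩
        by_contra hk
        rw [Set.mem_Iio, not_lt] at hk
        have h1 := hK k hk
        rw [Real.dist_eq] at h1
        have h2 : |b - a| ≤ |b - x (n k)| + |x (n k) - a| := abs_sub_le b (x (n k)) a
        rw [abs_sub_comm b (x (n k))] at h2
        have : |b - a| < r + r := by linarith
        rw [hr] at this
        linarith
      apply (hinf.diff hfin).mono
      rintro i ⟨hir, hnot⟩
      simp only [Set.mem_setOf_eq] at hir hnot ⊢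
      refine ⟨fun hek => hnot ⟨hir, hek⟩, ?_⟩
      have h1 : (0:ℝ) < 1/(j+1) := by positivity
      have h2 : |x i - a| ≤ |x i - b| + |b - a| := abs_sub_le (x i) b a
      have : |x i - a| < 1/(j+1)/2 + 1/(j+1) := by
        rw [hr] at hir
        linarith
      have he : 2/((j:ℝ)+1) = 2 * (1/((j:ℝ)+1)) := by ring
      linarith
    have exgt : ∀ j c : ℕ, ∃ i : ℕ,
        i ∈ {i : ℕ | (¬ ∃ k, n k = i) ∧ |x i - a| < 2/(j+1)} ∧ c < i :=
      fun j c => (hB j).exists_gt c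
    choose f hf1 hf2 using exgt
    let q : ℕ → ℕ := fun j => Nat.rec (f 0 0) (fun j ih => f (j+1) ih) j
    have hqs : ∀ j, q (j+1) = f (j+1) (q j) := fun j => rfl
    have hqmono : StrictMono q := strictMono_nat_of_lt_succ (fun j => by
      rw [hqs]; exact hf2 _ _)
    have hqmem : ∀ j, (¬ ∃ k, n k = q j) ∧ |x (q j) - a| < 2/(j+1) := by
      intro j
      cases j with
      | zero => exact hf1 0 0
      | succ j => rw [hqs]; exact hf1 _ _
    have hqt : Tendsto (fun t => x (q t)) atTop (nhds a) := by
      rw [Metric.tendsto_atTop]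
      intro ε hε
      obtain ⟨J, hJ⟩ := exists_nat_gt (2/ε)
      refine ⟨J, fun j hj => ?_⟩
      rw [Real.dist_eq]
      have h1 := (hqmem j).2
      have hJj : (J:ℝ) ≤ j := by exact_mod_cast hj
      have h3 : 2/ε < (j:ℝ)+1 := by linarith
      have h4 : 2 < ((j:ℝ)+1) * ε := (div_lt_iff₀ hε).mp h3
      have h2 : 2/((j:ℝ)+1) < ε := by
        rw [div_lt_iff₀ (by positivity)]
        linarith
      linarith
    have hfin := hess q hqmono hqt
    have huniv : {t : ℕ | ¬ ∃ k, n k = q t} = Set.univ :=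
      Set.eq_univ_of_forall (fun t => (hqmem t).1)
    rw [huniv] at hfin
    exact Set.infinite_univ hfin
  · -- isolated → essential subsequence exists
    rintro ⟨ε₀, hε₀, hiso⟩
    classical
    set p : ℕ → Prop := fun i => |x i - a| < ε₀/2 with hp
    have hTinf : (setOf p).Infinite := infinite_near_subLimit x a ha (by positivity)
    set n : ℕ → ℕ := Nat.nth p with hn
    have hmono : StrictMono n := Nat.nth_strictMono hTinf
    have hmem : ∀ k, p (n k) := Nat.nth_mem_of_infinite hTinf
    obtain ⟨C, hC⟩ := hx
    have htend : Tendsto (fun k => x (n k)) atTop (nhds a) := by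
      by_contra hnt
      rw [Metric.tendsto_atTop] at hnt
      push_neg at hnt
      obtain ⟨δ, hδ, hfreq⟩ := hnt
      have hfr : ∃ᶠ k in atTop, δ ≤ dist (x (n k)) a := by
        rw [Filter.frequently_atTop]
        intro N; obtain ⟨k, hk1, hk2⟩ := hfreq N; exact ⟨k, hk1, hk2⟩
      obtain ⟨φ, hφ, hφp⟩ := Filter.extraction_of_frequently_atTop hfr
      have hcomp : ∀ k, x (n (φ k)) ∈ Set.Icc (-C) C := by
        intro k
        rw [Set.mem_Icc]
        exact abs_le.mp (hC _)
      obtain ⟨b, hbmem, ψ, hψ, hψt⟩ :=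
        (isCompact_Icc (a := -C) (b := C)).tendsto_subseq hcomp
      have hbsub : IsSubLimit x b := ⟨fun k => n (φ (ψ k)), hmono.comp (hφ.comp hψ), hψt⟩
      have h1 : Tendsto (fun k => |x (n (φ (ψ k))) - a|) atTop (nhds (|b - a|)) := by
        have ht2 : Tendsto (fun k => x (n (φ (ψ k))) - a) atTop (nhds (b - a)) :=
          hψt.sub tendsto_const_nhds
        exact ht2.abs
      have hbge : δ ≤ |b - a| := by
        refine ge_of_tendsto h1 (Filter.Eventually.of_forall (fun k => ?_))
        have := hφp (ψ k)
        rwa [Real.dist_eq] at this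
      have hble : |b - a| ≤ ε₀/2 :=
        le_of_tendsto h1 (Filter.Eventually.of_forall (fun k => le_of_lt (hmem _)))
      have hbIoo : b ∈ Set.Ioo (a - ε₀) (a + ε₀) := by
        have hlt : |b - a| < ε₀ := lt_of_le_of_lt hble (by linarith)
        rw [abs_sub_lt_iff] at hlt
        exact Set.mem_Ioo.mpr ⟨by linarith [hlt.2], by linarith [hlt.1]⟩
      have hba : b = a := by
        have hbm : b ∈ Set.Ioo (a - ε₀) (a + ε₀) ∩ subLimitSet x := ⟨hbIoo, hbsub⟩
        rwa [hiso] at hbm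
      rw [hba] at hbge
      simp at hbge
      linarith
    refine ⟨n, hmono, htend, ?_⟩
    intro m hm hmt
    rw [Metric.tendsto_atTop] at hmt
    obtain ⟨N, hN⟩ := hmt (ε₀/2) (by positivity)
    apply Set.Finite.subset (Set.finite_Iio N)
    intro t ht
    simp only [Set.mem_setOf_eq] at ht
    by_contra htN
    rw [Set.mem_Iio, not_lt] at htN
    apply ht
    have hpm : p (m t) := by
      have := hN t htN
      rwa [Real.dist_eq] at this
    exact ⟨Nat.count p (m t), Nat.nth_count hpm⟩
end

section
/- There does not exist a (countably additive, nonnegative) measure μ on ℕ such that μ({n : x(n) ∈ S}) = w(x,S) for every properly distributed bounded real sequence x and every Borel subset S of [−‖x‖_∞, ‖x‖_∞]. -/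
open Filter

/-!
A sequence that differs from a constant `c` at only finitely many places is properly
distributed: every set has weight `1` or `0` according as it contains `c` or not, because a
window of length `n` meets the exceptional places at most a bounded number of times.
Applied to the indicator of `{j}`, the set `{1}` forces `μ {j} = 0` for every `j`, while `{0}`
forces `μ {j}ᶜ = 1`; a measure on the countable set `ℕ` cannot do both.
-/

lemma seqCount_add_seqCount_compl (x : ℕ → ℝ) (S : Set ℝ) (i n : ℕ) :
    seqCount x S i n + seqCount x Sᶜ i n = n := by
  have := Set.ncard_inter_add_ncard_sdiff_eq_ncard (Set.Iio n) {k | x (k + i) ∈ S}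
    (Set.finite_Iio n)
  rwa [Set.ncard_Iio_nat] at this

lemma seqCount_le_ncard {x : ℕ → ℝ} {S : Set ℝ} (hS : {n | x n ∈ S}.Finite) (i n : ℕ) :
    seqCount x S i n ≤ {n | x n ∈ S}.ncard :=
  Set.ncard_le_ncard_of_injOn (· + i) (fun _ hk => hk.2) (fun _ _ _ _ h => by simpa using h) hS

lemma hasSetWeight_zero_of_finite {x : ℕ → ℝ} {S : Set ℝ} (hS : {n | x n ∈ S}.Finite) :
    HasSetWeight x S 0 := by
  intro ε hε
  obtain ⟨N, hN⟩ := exists_nat_gt ({n | x n ∈ S}.ncard / ε)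
  refine ⟨N, fun n hn i => ?_⟩
  have hNn : (N : ℝ) ≤ n := Nat.cast_le.2 hn
  have hn_pos : (0 : ℝ) < n := (div_nonneg (Nat.cast_nonneg _) hε.le).trans_lt (hN.trans_le hNn)
  rw [sub_zero, abs_of_nonneg (by positivity), div_lt_iff₀ hn_pos]
  rw [div_lt_iff₀ hε] at hN
  calc (seqCount x S i n : ℝ) ≤ {n | x n ∈ S}.ncard := Nat.cast_le.2 (seqCount_le_ncard hS i n)
    _ < N * ε := hN
    _ ≤ ε * n := by nlinarith

lemma HasSetWeight.compl {x : ℕ → ℝ} {S : Set ℝ} {w : ℝ} (h : HasSetWeight x S w) :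
    HasSetWeight x Sᶜ (1 - w) := by
  intro ε hε
  obtain ⟨N, hN⟩ := h ε hε
  refine ⟨max N 1, fun n hn i => ?_⟩
  have hn_pos : (0 : ℝ) < n := by exact_mod_cast le_of_max_le_right hn
  have hsum : (seqCount x Sᶜ i n : ℝ) = n - seqCount x S i n := by
    rw [eq_sub_iff_add_eq, add_comm]
    exact_mod_cast seqCount_add_seqCount_compl x S i n
  have hflip : (seqCount x Sᶜ i n : ℝ) / n - (1 - w) = -((seqCount x S i n : ℝ) / n - w) := by
    rw [hsum]
    field_simp
    ring
  rw [hflip, abs_neg]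
  exact hN n (le_of_max_le_left hn) i

lemma hasSetWeight_one_of_finite {x : ℕ → ℝ} {S : Set ℝ} (hS : {n | x n ∉ S}.Finite) :
    HasSetWeight x S 1 := by
  simpa using (hasSetWeight_zero_of_finite (S := Sᶜ) hS).compl

lemma properlyDistributed_of_finite_ne {x : ℕ → ℝ} (c : ℝ) (hx : {n | x n ≠ c}.Finite) :
    ProperlyDistributed x := by
  intro S _ _
  by_cases hc : c ∈ S
  · exact ⟨1, hasSetWeight_one_of_finite (hx.subset fun n hn h => hn (h ▸ hc))⟩
  · exact ⟨0, hasSetWeight_zero_of_finite (hx.subset fun n hn h => hc (h ▸ hn))⟩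

lemma abs_pi_single_one_le (j n : ℕ) : |(Pi.single j 1 : ℕ → ℝ) n| ≤ 1 := by
  rcases eq_or_ne n j with rfl | h <;> simp [*]

lemma isBddSeq_pi_single (j : ℕ) : IsBddSeq (Pi.single j 1) :=
  ⟨1, abs_pi_single_one_le j⟩

lemma supNorm_pi_single (j : ℕ) : supNorm (Pi.single j 1) = 1 :=
  le_antisymm (ciSup_le (abs_pi_single_one_le j))
    (le_ciSup_of_le ⟨1, Set.forall_mem_range.2 (abs_pi_single_one_le j)⟩ j (by simp))

lemma setOf_pi_single_eq_one (j : ℕ) : {n | (Pi.single j 1 : ℕ → ℝ) n = 1} = {j} := by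
  ext n
  simp [Pi.single_apply]

lemma setOf_pi_single_eq_zero (j : ℕ) : {n | (Pi.single j 1 : ℕ → ℝ) n = 0} = {j}ᶜ := by
  ext n
  simp [Pi.single_apply]

lemma properlyDistributed_pi_single (j : ℕ) : ProperlyDistributed (Pi.single j 1) :=
  properlyDistributed_of_finite_ne 0 <| by
    simp only [ne_eq, ← Set.compl_ofPred, setOf_pi_single_eq_zero, compl_compl,
      Set.finite_singleton]

/-- There is no (countably additive, nonnegative) measure `μ` on `ℕ` such that
`μ {n : x n ∈ S} = w(x, S)` for every properly distributed bounded sequence `x`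
and every Borel subset `S` of `[-‖x‖∞, ‖x‖∞]`. -/
theorem no_measure_representing_weights :
    ¬ ∃ μ : MeasureTheory.Measure ℕ,
      ∀ x : ℕ → ℝ, IsBddSeq x → ProperlyDistributed x →
        ∀ S : Set ℝ, MeasurableSet S →
          S ⊆ Set.Icc (-(supNorm x)) (supNorm x) →
          ∀ w : ℝ, HasSetWeight x S w → μ {n : ℕ | x n ∈ S} = ENNReal.ofReal w := by
  rintro ⟨μ, hμ⟩
  have hweight (j : ℕ) (a : ℝ) (ha : a ∈ Set.Icc (-1 : ℝ) 1) (w : ℝ)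
      (hw : HasSetWeight (Pi.single j 1) {a} w) :
      μ {n | (Pi.single j 1 : ℕ → ℝ) n = a} = ENNReal.ofReal w :=
    hμ _ (isBddSeq_pi_single j) (properlyDistributed_pi_single j) {a} (measurableSet_singleton a)
      (by rwa [supNorm_pi_single, Set.singleton_subset_iff]) w hw
  have hatom (j : ℕ) : μ {j} = 0 := by
    simpa [setOf_pi_single_eq_one] using hweight j 1 (by norm_num) 0
      (hasSetWeight_zero_of_finite (by simp [setOf_pi_single_eq_one]))
  have hcompl : μ {0}ᶜ = 1 := by
    simpa [setOf_pi_single_eq_zero] using hweight 0 0 (by norm_num) 1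
      (hasSetWeight_one_of_finite (by simp [← Set.compl_ofPred, setOf_pi_single_eq_zero]))
  have : MeasureTheory.NullSingletonClass μ := ⟨hatom⟩
  simp [(Set.to_countable _).measure_zero μ] at hcompl
end

section
/- If s is a simply distributed bounded real sequence with finite range {a_1, …, a_m}, then s is almost convergent and for every Banach limit L, L(s) = ∑_{j=1}^m a_j·w(s,a_j). -/
open Filter

section BLHelpers

private lemma bddSeq_add {x y : ℕ → ℝ} (hx : IsBddSeq x) (hy : IsBddSeq y) :
    IsBddSeq (x + y) := by
  obtain ⟨C, hC⟩ := hx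
  obtain ⟨D, hD⟩ := hy
  exact ⟨C + D, fun n => (abs_add_le _ _).trans (add_le_add (hC n) (hD n))⟩

private lemma bddSeq_smul (c : ℝ) {x : ℕ → ℝ} (hx : IsBddSeq x) :
    IsBddSeq (c • x) := by
  obtain ⟨C, hC⟩ := hx
  refine ⟨|c| * C, fun n => ?_⟩
  simp only [Pi.smul_apply, smul_eq_mul, abs_mul]
  exact mul_le_mul_of_nonneg_left (hC n) (abs_nonneg c)

private lemma bddSeq_const (c : ℝ) : IsBddSeq (fun _ => c) := ⟨|c|, fun _ => le_rfl⟩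

private lemma bddSeq_zero : IsBddSeq (0 : ℕ → ℝ) := ⟨0, by simp⟩

private lemma bddSeq_sum {ι : Type*} (F : Finset ι) (f : ι → ℕ → ℝ)
    (h : ∀ j ∈ F, IsBddSeq (f j)) : IsBddSeq (∑ j ∈ F, f j) := by
  classical
  induction F using Finset.induction with
  | empty => simpa using bddSeq_zero
  | @insert j F hj ih =>
      rw [Finset.sum_insert hj]
      exact bddSeq_add (h j (Finset.mem_insert_self _ _))
        (ih fun i hi => h i (Finset.mem_insert_of_mem hi))

private lemma bddSeq_shift {x : ℕ → ℝ} (hx : IsBddSeq x) (k : ℕ) :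
    IsBddSeq (fun n => x (n + k)) := by
  obtain ⟨C, hC⟩ := hx
  exact ⟨C, fun n => hC _⟩

variable {L : (ℕ → ℝ) → ℝ} (hL : IsBanachLimit L)

private lemma BL_zero (hL : IsBanachLimit L) : L 0 = 0 := by
  have := hL.2.1 0 (fun _ => 1) (bddSeq_const 1)
  simpa using this

private lemma BL_sum (hL : IsBanachLimit L) {ι : Type*} (F : Finset ι) (f : ι → ℕ → ℝ)
    (h : ∀ j ∈ F, IsBddSeq (f j)) : L (∑ j ∈ F, f j) = ∑ j ∈ F, L (f j) := by
  classical
  induction F using Finset.induction with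
  | empty => simpa using BL_zero hL
  | @insert j F hj ih =>
      rw [Finset.sum_insert hj, Finset.sum_insert hj,
        hL.1 _ _ (h j (Finset.mem_insert_self _ _))
          (bddSeq_sum F f fun i hi => h i (Finset.mem_insert_of_mem hi)),
        ih fun i hi => h i (Finset.mem_insert_of_mem hi)]

private lemma BL_shift (hL : IsBanachLimit L) {x : ℕ → ℝ} (hx : IsBddSeq x) (k : ℕ) :
    L (fun n => x (n + k)) = L x := by
  induction k with
  | zero => simp
  | succ k ih =>
      have h1 : (fun n => x (n + (k + 1))) = fun n => (fun m => x (m + k)) (n + 1) := by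
        funext n; ring_nf
      rw [h1, hL.2.2.2.1 _ (bddSeq_shift hx k), ih]

private lemma BL_bound (hL : IsBanachLimit L) {y : ℕ → ℝ} {C : ℝ}
    (hC : ∀ n, |y n| ≤ C) : |L y| ≤ C := by
  have hyb : IsBddSeq y := ⟨C, hC⟩
  have h1 : L ((fun _ => C) + y) = C + L y := by
    have hc : L ((C : ℝ) • (fun _ => (1:ℝ))) = C := by
      rw [hL.2.1 C _ (bddSeq_const 1), hL.2.2.2.2]; ring
    have : ((fun _ => C) : ℕ → ℝ) = (C : ℝ) • (fun _ => (1:ℝ)) := by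
      funext n; simp
    rw [hL.1 _ _ (bddSeq_const C) hyb, this, hc]
  have h2 : L ((fun _ => C) + (-1 : ℝ) • y) = C - L y := by
    have hc : L ((C : ℝ) • (fun _ => (1:ℝ))) = C := by
      rw [hL.2.1 C _ (bddSeq_const 1), hL.2.2.2.2]; ring
    have : ((fun _ => C) : ℕ → ℝ) = (C : ℝ) • (fun _ => (1:ℝ)) := by
      funext n; simp
    rw [hL.1 _ _ (bddSeq_const C) (bddSeq_smul _ hyb), this, hc,
      hL.2.1 (-1) y hyb]; ring
  have p1 : 0 ≤ C + L y := by
    rw [← h1]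
    exact hL.2.2.1 _ (bddSeq_add (bddSeq_const C) hyb)
      (fun n => by have := (abs_le.mp (hC n)).1; simpa using by linarith)
  have p2 : 0 ≤ C - L y := by
    rw [← h2]
    refine hL.2.2.1 _ (bddSeq_add (bddSeq_const C) (bddSeq_smul _ hyb)) fun n => ?_
    have := (abs_le.mp (hC n)).2
    simp only [Pi.add_apply, Pi.smul_apply, smul_eq_mul]
    linarith
  rw [abs_le]; constructor <;> linarith

end BLHelpers

/-- A simply distributed bounded sequence `s`, with finite range
`{a 0, …, a (m-1)}` and weights `w j = w(s, a j)`, is almost convergent and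
every Banach limit of `s` equals `∑ a_j · w(s, a_j)`. -/
theorem simplyDistributed_almostConvergent (s : ℕ → ℝ) (hs : IsBddSeq s)
    (m : ℕ) (a : Fin m → ℝ) (hinj : Function.Injective a)
    (hrange : Set.range s = Set.range a) (w : Fin m → ℝ)
    (hw : ∀ j, HasSetWeight s {a j} (w j)) :
    AlmostConvergent s ∧
      ∀ L : (ℕ → ℝ) → ℝ, IsBanachLimit L → L s = ∑ j, a j * w j := by
  classical
  suffices h : ∀ L : (ℕ → ℝ) → ℝ, IsBanachLimit L → L s = ∑ j, a j * w j by
    exact ⟨⟨_, h⟩, h⟩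
  intro L hL
  set χ : Fin m → ℕ → ℝ := fun j n => if s n = a j then 1 else 0 with hχ
  have hχbdd : ∀ j, IsBddSeq (χ j) := by
    intro j
    refine ⟨1, fun n => ?_⟩
    by_cases h : s n = a j <;> simp [hχ, h]
  have hdecomp : s = ∑ j, (a j) • χ j := by
    funext n
    have hmem : s n ∈ Set.range a := hrange ▸ Set.mem_range_self n
    obtain ⟨j0, hj0⟩ := hmem
    have hsum : ∀ j : Fin m, a j * χ j n = if j = j0 then a j0 else 0 := by
      intro j
      by_cases h : j = j0
      · subst h; simp [hχ, hj0.symm]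
      · have hne : s n ≠ a j := by
          rw [← hj0]; intro hc
          exact h (hinj hc.symm)
        simp [hχ, hne, h]
    rw [Finset.sum_apply]
    simp only [Pi.smul_apply, smul_eq_mul]
    simp only [hsum]
    simp [← hj0]
  have hcount : ∀ (j : Fin m) (i n : ℕ),
      (seqCount s {a j} i n : ℝ) = ∑ k ∈ Finset.range n, χ j (k + i) := by
    intro j i n
    have hset : {k : ℕ | k < n ∧ s (k + i) ∈ ({a j} : Set ℝ)} =
        ↑((Finset.range n).filter fun k => s (k + i) = a j) := by
      ext k; simp [Finset.mem_filter, Finset.mem_range]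
    rw [seqCount, hset, Set.ncard_coe_finset]
    simp [hχ, Finset.sum_boole]
  have hLχ : ∀ j, L (χ j) = w j := by
    intro j
    have key : ∀ ε : ℝ, 0 < ε → |L (χ j) - w j| ≤ ε := by
      intro ε hε
      obtain ⟨N, hN⟩ := hw j ε hε
      set n := max N 1 with hn
      have hn1 : 1 ≤ n := le_max_right _ _
      have hnN : N ≤ n := le_max_left _ _
      have hnpos : (0:ℝ) < n := by exact_mod_cast hn1
      set y : ℕ → ℝ := fun i => (∑ k ∈ Finset.range n, χ j (k + i)) / n - w j
        with hy
      have hybd : ∀ i, |y i| ≤ ε := by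
        intro i
        have h1 := hN n hnN i
        rw [hcount j i n] at h1
        exact le_of_lt h1
      have hsumbdd : IsBddSeq (fun i => ∑ k ∈ Finset.range n, χ j (k + i)) := by
        refine ⟨n * 1, fun i => ?_⟩
        calc |∑ k ∈ Finset.range n, χ j (k + i)| ≤
            ∑ k ∈ Finset.range n, |χ j (k + i)| := Finset.abs_sum_le_sum_abs _ _
          _ ≤ ∑ k ∈ Finset.range n, 1 := by
              refine Finset.sum_le_sum fun k _ => ?_
              by_cases h : s (k + i) = a j <;> simp [hχ, h]
          _ = n * 1 := by simp
      have hsumfn : (fun i => ∑ k ∈ Finset.range n, χ j (k + i)) =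
          ∑ k ∈ Finset.range n, (fun i => χ j (i + k)) := by
        funext i
        rw [Finset.sum_apply]
        exact Finset.sum_congr rfl fun k _ => by rw [add_comm]
      have hLsum : L (fun i => ∑ k ∈ Finset.range n, χ j (k + i)) =
          n * L (χ j) := by
        rw [hsumfn, BL_sum hL _ _ (fun k _ => bddSeq_shift (hχbdd j) k)]
        rw [Finset.sum_congr rfl fun k _ => BL_shift hL (hχbdd j) k]
        simp [mul_comm]
      have hyrep : y = (1 / (n:ℝ)) • (fun i => ∑ k ∈ Finset.range n, χ j (k + i))
          + (-(w j)) • (fun _ => (1:ℝ)) := by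
        funext i
        simp only [hy, Pi.add_apply, Pi.smul_apply, smul_eq_mul]
        ring
      have hLy : L y = L (χ j) - w j := by
        rw [hyrep, hL.1 _ _ (bddSeq_smul _ hsumbdd) (bddSeq_smul _ (bddSeq_const 1)),
          hL.2.1 _ _ hsumbdd, hL.2.1 _ _ (bddSeq_const 1), hL.2.2.2.2, hLsum]
        field_simp
        ring
      have hb := BL_bound hL hybd
      rwa [hLy] at hb
    by_contra hne
    have hd : 0 < |L (χ j) - w j| := by
      rw [abs_pos]
      exact sub_ne_zero_of_ne hne
    have := key (|L (χ j) - w j| / 2) (by linarith)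
    linarith
  rw [hdecomp, BL_sum hL _ _ (fun j _ => bddSeq_smul _ (hχbdd j))]
  exact Finset.sum_congr rfl fun j _ => by
    rw [hL.2.1 _ _ (hχbdd j), hLχ j]
end

section
/- For any properly distributed bounded real sequence x, there exists a sequence {s_k} of simply distributed bounded real sequences such that ‖s_k − x‖_∞ → 0 as k → ∞ (indeed one can choose s_k with ‖s_k − x‖_∞ < 1/k). -/
/-! Round every term of `x` down to the grid `δℤ` with `δ = 1/(k+1)`. The rounded sequence
is within `δ` of `x` and takes finitely many values because `x` is bounded. Rounding is a
Borel map, so the positions where the rounded sequence takes a value `jδ` are those where `x`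
lies in the Borel set `[jδ, (j+1)δ)`: its weights are weights of `x`. -/

open Filter

open Set

lemma IsBddSeq.abs_le_supNorm {x : ℕ → ℝ} (hx : IsBddSeq x) (n : ℕ) : |x n| ≤ supNorm x := by
  obtain ⟨C, hC⟩ := hx
  exact le_ciSup ⟨C, by rintro _ ⟨m, rfl⟩; exact hC m⟩ n

lemma IsBddSeq.finite_range_floor {x : ℕ → ℝ} (hx : IsBddSeq x) :
    (range fun n => ⌊x n⌋).Finite := by
  obtain ⟨C, hC⟩ := hx
  refine (finite_Icc ⌊-C⌋ ⌊C⌋).subset ?_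
  rintro _ ⟨n, rfl⟩
  exact ⟨Int.floor_le_floor (abs_le.mp (hC n)).1, Int.floor_le_floor (abs_le.mp (hC n)).2⟩

lemma IsBddSeq.div_const {x : ℕ → ℝ} (hx : IsBddSeq x) (c : ℝ) :
    IsBddSeq fun n => x n / c := by
  obtain ⟨C, hC⟩ := hx
  refine ⟨C / |c|, fun n => ?_⟩
  rw [abs_div]
  exact div_le_div_of_nonneg_right (hC n) (abs_nonneg c)

lemma seqCount_inter_of_forall_mem {x : ℕ → ℝ} {T : Set ℝ} (hT : ∀ m, x m ∈ T)
    (S : Set ℝ) (i n : ℕ) : seqCount x (S ∩ T) i n = seqCount x S i n := by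
  simp only [seqCount, mem_inter_iff, hT, and_true]

lemma ProperlyDistributed.exists_hasSetWeight {x : ℕ → ℝ} (hpd : ProperlyDistributed x)
    (hx : IsBddSeq x) {S : Set ℝ} (hS : MeasurableSet S) : ∃ w, HasSetWeight x S w := by
  have hmem : ∀ m, x m ∈ Icc (-supNorm x) (supNorm x) := fun m => abs_le.mp (hx.abs_le_supNorm m)
  obtain ⟨w, hw⟩ := hpd _ (hS.inter measurableSet_Icc) inter_subset_right
  refine ⟨w, fun ε hε => ?_⟩
  simpa only [seqCount_inter_of_forall_mem hmem] using hw ε hε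

lemma seqCount_comp (f : ℝ → ℝ) (x : ℕ → ℝ) (S : Set ℝ) (i n : ℕ) :
    seqCount (f ∘ x) S i n = seqCount x (f ⁻¹' S) i n :=
  rfl

lemma ProperlyDistributed.simplyDistributed_comp {x : ℕ → ℝ} (hpd : ProperlyDistributed x)
    (hx : IsBddSeq x) {f : ℝ → ℝ} (hf : Measurable f) (hfin : (range (f ∘ x)).Finite) :
    SimplyDistributed (f ∘ x) := by
  refine ⟨hfin, fun a _ => ?_⟩
  obtain ⟨w, hw⟩ := hpd.exists_hasSetWeight hx (hf (measurableSet_singleton a))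
  exact ⟨w, by simpa only [HasSetWeight, seqCount_comp] using hw⟩

noncomputable def roundDown (δ t : ℝ) : ℝ := ⌊t / δ⌋ * δ

lemma measurable_roundDown (δ : ℝ) : Measurable (roundDown δ) :=
  (measurable_from_top.comp (Int.measurable_floor.comp (measurable_id.div_const δ))).mul_const δ

lemma abs_roundDown_sub_lt {δ : ℝ} (hδ : 0 < δ) (t : ℝ) : |roundDown δ t - t| < δ := by
  have h₁ : (⌊t / δ⌋ : ℝ) * δ ≤ t := (le_div_iff₀ hδ).mp (Int.floor_le _)
  have h₂ : t < (⌊t / δ⌋ + 1 : ℝ) * δ := (div_lt_iff₀ hδ).mp (Int.lt_floor_add_one _)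
  rw [abs_lt, roundDown]
  constructor <;> linarith

lemma IsBddSeq.finite_range_roundDown_comp {x : ℕ → ℝ} (hx : IsBddSeq x) (δ : ℝ) :
    (range (roundDown δ ∘ x)).Finite := by
  have h := ((hx.div_const δ).finite_range_floor).image fun j : ℤ => (j : ℝ) * δ
  rwa [← range_comp] at h

lemma supNorm_roundDown_comp_sub_le {δ : ℝ} (hδ : 0 < δ) (x : ℕ → ℝ) :
    supNorm (fun n => roundDown δ (x n) - x n) ≤ δ :=
  Real.iSup_le (fun n => (abs_roundDown_sub_lt hδ (x n)).le) hδ.le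

/-- Every properly distributed bounded sequence `x` is the sup-norm limit of a
sequence of simply distributed sequences; indeed one can choose `s k` with
`‖s k - x‖∞ < 1/k`. -/
theorem properlyDistributed_approx_by_simplyDistributed (x : ℕ → ℝ)
    (hx : IsBddSeq x) (hpd : ProperlyDistributed x) :
    ∃ s : ℕ → ℕ → ℝ, (∀ k, SimplyDistributed (s k)) ∧
      (∀ k : ℕ, 0 < k → supNorm (fun n => s k n - x n) < 1 / k) ∧
      Filter.Tendsto (fun k => supNorm (fun n => s k n - x n))
        Filter.atTop (nhds 0) := by
  have hδ (k : ℕ) : (0 : ℝ) < 1 / ((k : ℝ) + 1) := by positivity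
  have hdist (k : ℕ) := supNorm_roundDown_comp_sub_le (hδ k) x
  refine ⟨fun k => roundDown (1 / ((k : ℝ) + 1)) ∘ x, fun k => ?_, fun k hk => ?_, ?_⟩
  · exact hpd.simplyDistributed_comp hx (measurable_roundDown _) (hx.finite_range_roundDown_comp _)
  · refine (hdist k).trans_lt ?_
    gcongr
    exact lt_add_one _
  · refine squeeze_zero (fun k => Real.iSup_nonneg fun n => abs_nonneg _) hdist ?_
    exact tendsto_one_div_add_atTop_nhds_zero_nat
end
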